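/- For all integers n, w, s ≥ 1 with 2^n ≥ s ≥ 6nw, and every unsatisfiable CNF formula F with n variables, every Resolution refutation of REF(F,s) has index-width at least w. -/

import Mathlib

/-! ## Clauses, CNFs and Resolution -/

/-- A clause over variables of type `α`: a finite set of literals `(x, b)`,
where `(x, true)` is the positive literal `X` and `(x, false)` is `¬X`. -/
abbrev Clause (α : Type) := Finset (α × Bool)

/-- A clause is non-tautological if it contains no variable together with its negation. -/
def Clause.Nontaut {α : Type} (C : Clause α) : Prop :=
  ∀ x : α, ¬((x, true) ∈ C ∧ (x, false) ∈ C)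

/-- A Resolution refutation of the set of clauses `F`: a nonempty sequence of
non-tautological clauses, each of which is a weakening (i.e. a superset) of a clause
of `F`, or a weakening of a resolvent `(D_v ∖ {X}) ∪ (D_w ∖ {¬X})` of two earlier
clauses `D_v, D_w` with `X ∈ D_v` and `¬X ∈ D_w`; the last clause is empty.
The length of the refutation is the length of the list. -/
def IsResRefutation {α : Type} [DecidableEq α] (F : Set (Clause α)) (P : List (Clause α)) : Prop :=
  P ≠ [] ∧
  (∀ u : Fin P.length,
      Clause.Nontaut (P.get u) ∧
      ((∃ C ∈ F, C ⊆ P.get u) ∨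
        ∃ v w : Fin P.length, (v : ℕ) < (u : ℕ) ∧ (w : ℕ) < (u : ℕ) ∧ ∃ x : α,
          (x, true) ∈ P.get v ∧ (x, false) ∈ P.get w ∧
          ((P.get v).erase (x, true) ∪ (P.get w).erase (x, false)) ⊆ P.get u)) ∧
  P.getLast? = some (∅ : Clause α)

/-- Satisfiability of a set of clauses. -/
def CnfSat {α : Type} (S : Set (Clause α)) : Prop :=
  ∃ a : α → Bool, ∀ C ∈ S, ∃ l ∈ C, a l.1 = l.2

/-- The size of a CNF: the sum of the sizes (numbers of literals) of its clauses. -/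
noncomputable def cnfSize {α : Type} (S : Set (Clause α)) : ℕ :=
  ∑ᶠ C ∈ S, Finset.card C

/-! ## Restrictions (partial assignments) -/

/-- The restriction (partial assignment) `ρ` satisfies the clause `C` (i.e. `C↾ρ = 1`). -/
def Clause.SatByR {α : Type} (ρ : α → Option Bool) (C : Clause α) : Prop :=
  ∃ l ∈ C, ρ l.1 = some l.2

/-- The restriction `ρ` falsifies the clause `C` (i.e. `C↾ρ = 0`). -/
def Clause.FalsByR {α : Type} (ρ : α → Option Bool) (C : Clause α) : Prop :=
  ∀ l ∈ C, ρ l.1 = some (!l.2)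

/-- The clause `C↾ρ` (relevant when `C` is neither satisfied nor falsified):
remove from `C` all falsified literals. -/
def Clause.restrictBy {α : Type} [DecidableEq α] (ρ : α → Option Bool) (C : Clause α) :
    Clause α :=
  C.filter (fun l => ρ l.1 ≠ some (!l.2))

/-- `F↾ρ` for a set of clauses `F`: it contains `C↾ρ` for those `C ∈ F` neither satisfied
nor falsified by `ρ`, together with the empty clause if some `C ∈ F` is falsified by `ρ`. -/
def cnfRestrict {α : Type} [DecidableEq α] (ρ : α → Option Bool) (S : Set (Clause α)) :
    Set (Clause α) :=
  { E | ∃ C ∈ S, ¬Clause.SatByR ρ C ∧ ¬Clause.FalsByR ρ C ∧ E = Clause.restrictBy ρ C } ∪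
  { E | E = (∅ : Clause α) ∧ ∃ C ∈ S, Clause.FalsByR ρ C }

open scoped Classical in
/-- `Π↾ρ` for a sequence of clauses: remove the satisfied clauses (the `1`s) and replace
the falsified ones (the `0`s) by the empty clause. -/
noncomputable def seqRestrict {α : Type} [DecidableEq α] (ρ : α → Option Bool)
    (P : List (Clause α)) : List (Clause α) :=
  (P.filter (fun C => decide (¬Clause.SatByR ρ C))).map
    (fun C => if Clause.FalsByR ρ C then (∅ : Clause α) else Clause.restrictBy ρ C)

/-- The partial assignment `σ` extends the partial assignment `ρ`. -/
def optExtends {α : Type} (ρ σ : α → Option Bool) : Prop :=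
  ∀ x b, ρ x = some b → σ x = some b

/-! ## CNFs with an explicit enumeration of clauses -/

/-- A CNF formula with variables `X_1, …, X_n` (indices in `Finset.Icc 1 n`) given with an
explicit enumeration `Cl 1, …, Cl m` of its clauses. -/
structure CNFFam where
  n : ℕ
  m : ℕ
  Cl : ℕ → Clause ℕ

namespace CNFFam

/-- Well-formedness: the clauses `C_1, …, C_m` are non-tautological, pairwise distinct
(they enumerate a set of clauses), and use only the variables `X_1, …, X_n`. -/
def WF (F : CNFFam) : Prop :=
  (∀ j ∈ Finset.Icc 1 F.m, Clause.Nontaut (F.Cl j) ∧ ∀ l ∈ F.Cl j, l.1 ∈ Finset.Icc 1 F.n) ∧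
  (∀ j ∈ Finset.Icc 1 F.m, ∀ j' ∈ Finset.Icc 1 F.m, F.Cl j = F.Cl j' → j = j')

/-- The underlying set of clauses. -/
def clauseSet (F : CNFFam) : Set (Clause ℕ) :=
  { C | ∃ j ∈ Finset.Icc 1 F.m, C = F.Cl j }

/-- `F` is satisfiable. -/
def Sat (F : CNFFam) : Prop := CnfSat F.clauseSet

/-- `F` is a 3-CNF: all clauses have size at most 3. -/
def Is3CNF (F : CNFFam) : Prop := ∀ j ∈ Finset.Icc 1 F.m, (F.Cl j).card ≤ 3

end CNFFam

/-! ## The variables of the formulas REF and RREF -/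

/-- The propositional variables of `REF(F,s)` and `RREF(F,s)`. -/
inductive RefVar : Type where
  | D (u i : ℕ) (b : Bool)
  | V (u i : ℕ)
  | I (u j : ℕ)
  | L (u v : ℕ)
  | R (u v : ℕ)
  | P (u : ℕ)
deriving DecidableEq

abbrev VClause := Clause RefVar

/-- The index mentioned by a variable: `D[u,i,b], V[u,i], I[u,j], L[u,v], R[u,v], P[u]`
all mention the index `u`. -/
def RefVar.idx : RefVar → ℕ
  | .D u _ _ => u
  | .V u _ => u
  | .I u _ => u
  | .L u _ => u
  | .R u _ => u
  | .P u => u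

/-- The positive literal on a variable. -/
def pLit (x : RefVar) : RefVar × Bool := (x, true)

/-- The negative literal on a variable. -/
def nLit (x : RefVar) : RefVar × Bool := (x, false)

/-- The index-width of a clause: the number of indices mentioned by its variables. -/
def idxWidth (C : VClause) : ℕ := (C.image (fun l => RefVar.idx l.1)).card

/-! ## The clauses of REF and RREF -/

namespace Ref

/-- (A1) `V[u,0] ∨ V[u,1] ∨ ⋯ ∨ V[u,n]`. -/
def A1 (F : CNFFam) (A : Finset ℕ) : Set VClause :=
  { C | ∃ u ∈ A, C = (Finset.range (F.n + 1)).image (fun i => pLit (.V u i)) }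

/-- (A2) `I[u,0] ∨ I[u,1] ∨ ⋯ ∨ I[u,m]`. -/
def A2 (F : CNFFam) (A : Finset ℕ) : Set VClause :=
  { C | ∃ u ∈ A, C = (Finset.range (F.m + 1)).image (fun j => pLit (.I u j)) }

/-- (A3) `L[u,0] ∨ L[u,1] ∨ ⋯ ∨ L[u,s]` (disjunction over the index set and 0). -/
def A3 (A : Finset ℕ) : Set VClause :=
  { C | ∃ u ∈ A, C = (insert 0 A).image (fun v => pLit (.L u v)) }

/-- (A4) `R[u,0] ∨ R[u,1] ∨ ⋯ ∨ R[u,s]`. -/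
def A4 (A : Finset ℕ) : Set VClause :=
  { C | ∃ u ∈ A, C = (insert 0 A).image (fun v => pLit (.R u v)) }

/-- (A5) `¬V[u,i] ∨ ¬V[u,i']`, `i ≠ i'`. -/
def A5 (F : CNFFam) (A : Finset ℕ) : Set VClause :=
  { C | ∃ u ∈ A, ∃ i ∈ Finset.range (F.n + 1), ∃ i' ∈ Finset.range (F.n + 1),
      i ≠ i' ∧ C = {nLit (.V u i), nLit (.V u i')} }

/-- (A6) `¬I[u,j] ∨ ¬I[u,j']`, `j ≠ j'`. -/
def A6 (F : CNFFam) (A : Finset ℕ) : Set VClause :=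
  { C | ∃ u ∈ A, ∃ j ∈ Finset.range (F.m + 1), ∃ j' ∈ Finset.range (F.m + 1),
      j ≠ j' ∧ C = {nLit (.I u j), nLit (.I u j')} }

/-- (A7) `¬L[u,v] ∨ ¬L[u,v']`, `v ≠ v'`. -/
def A7 (A : Finset ℕ) : Set VClause :=
  { C | ∃ u ∈ A, ∃ v ∈ insert 0 A, ∃ v' ∈ insert 0 A,
      v ≠ v' ∧ C = {nLit (.L u v), nLit (.L u v')} }

/-- (A8) `¬R[u,v] ∨ ¬R[u,v']`, `v ≠ v'`. -/
def A8 (A : Finset ℕ) : Set VClause :=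
  { C | ∃ u ∈ A, ∃ v ∈ insert 0 A, ∃ v' ∈ insert 0 A,
      v ≠ v' ∧ C = {nLit (.R u v), nLit (.R u v')} }

/-- (A9) `¬I[u,0] ∨ ¬V[u,0]`. -/
def A9 (A : Finset ℕ) : Set VClause := { C | ∃ u ∈ A, C = {nLit (.I u 0), nLit (.V u 0)} }

/-- (A10) `I[u,0] ∨ V[u,0]`. -/
def A10 (A : Finset ℕ) : Set VClause := { C | ∃ u ∈ A, C = {pLit (.I u 0), pLit (.V u 0)} }

/-- (A11) `¬I[u,0] ∨ ¬L[u,0]`. -/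
def A11 (A : Finset ℕ) : Set VClause := { C | ∃ u ∈ A, C = {nLit (.I u 0), nLit (.L u 0)} }

/-- (A12) `¬I[u,0] ∨ ¬R[u,0]`. -/
def A12 (A : Finset ℕ) : Set VClause := { C | ∃ u ∈ A, C = {nLit (.I u 0), nLit (.R u 0)} }

/-- (A13) `¬L[u,v]` for `u ≤ v`. -/
def A13 (A : Finset ℕ) : Set VClause :=
  { C | ∃ u ∈ A, ∃ v ∈ A, u ≤ v ∧ C = {nLit (.L u v)} }

/-- (A14) `¬R[u,v]` for `u ≤ v`. -/
def A14 (A : Finset ℕ) : Set VClause :=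
  { C | ∃ u ∈ A, ∃ v ∈ A, u ≤ v ∧ C = {nLit (.R u v)} }

/-- (A15) `¬L[u,v] ∨ ¬V[u,i] ∨ D[v,i,0]`. -/
def A15 (F : CNFFam) (A : Finset ℕ) : Set VClause :=
  { C | ∃ u ∈ A, ∃ v ∈ A, ∃ i ∈ Finset.Icc 1 F.n,
      C = {nLit (.L u v), nLit (.V u i), pLit (.D v i false)} }

/-- (A16) `¬R[u,v] ∨ ¬V[u,i] ∨ D[v,i,1]`. -/
def A16 (F : CNFFam) (A : Finset ℕ) : Set VClause :=
  { C | ∃ u ∈ A, ∃ v ∈ A, ∃ i ∈ Finset.Icc 1 F.n,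
      C = {nLit (.R u v), nLit (.V u i), pLit (.D v i true)} }

/-- (A17) `¬L[u,v] ∨ ¬V[u,i] ∨ ¬D[v,i',b] ∨ D[u,i',b]`, `i' ≠ i`. -/
def A17 (F : CNFFam) (A : Finset ℕ) : Set VClause :=
  { C | ∃ u ∈ A, ∃ v ∈ A, ∃ i ∈ Finset.Icc 1 F.n, ∃ i' ∈ Finset.Icc 1 F.n, ∃ b : Bool,
      i' ≠ i ∧ C = {nLit (.L u v), nLit (.V u i), nLit (.D v i' b), pLit (.D u i' b)} }

/-- (A18) `¬R[u,v] ∨ ¬V[u,i] ∨ ¬D[v,i',b] ∨ D[u,i',b]`, `i' ≠ i`. -/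
def A18 (F : CNFFam) (A : Finset ℕ) : Set VClause :=
  { C | ∃ u ∈ A, ∃ v ∈ A, ∃ i ∈ Finset.Icc 1 F.n, ∃ i' ∈ Finset.Icc 1 F.n, ∃ b : Bool,
      i' ≠ i ∧ C = {nLit (.R u v), nLit (.V u i), nLit (.D v i' b), pLit (.D u i' b)} }

/-- (A19) `¬I[u,j] ∨ D[u,i,b]` for `X_i^{(b)} ∈ C_j`. -/
def A19 (F : CNFFam) (A : Finset ℕ) : Set VClause :=
  { C | ∃ u ∈ A, ∃ j ∈ Finset.Icc 1 F.m, ∃ i : ℕ, ∃ b : Bool,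
      (i, b) ∈ F.Cl j ∧ C = {nLit (.I u j), pLit (.D u i b)} }

/-- (A20) `¬D[u,i,0] ∨ ¬D[u,i,1]`. -/
def A20 (F : CNFFam) (A : Finset ℕ) : Set VClause :=
  { C | ∃ u ∈ A, ∃ i ∈ Finset.Icc 1 F.n, C = {nLit (.D u i false), nLit (.D u i true)} }

/-- (A21) `¬D[s,i,b]` (for the last index `t`). -/
def A21 (F : CNFFam) (t : ℕ) : Set VClause :=
  { C | ∃ i ∈ Finset.Icc 1 F.n, ∃ b : Bool, C = {nLit (.D t i b)} }

/-- (A22) `¬P[u] ∨ ¬L[u,v] ∨ P[v]`. -/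
def A22 (A : Finset ℕ) : Set VClause :=
  { C | ∃ u ∈ A, ∃ v ∈ A, C = {nLit (.P u), nLit (.L u v), pLit (.P v)} }

/-- (A23) `¬P[u] ∨ ¬R[u,v] ∨ P[v]`. -/
def A23 (A : Finset ℕ) : Set VClause :=
  { C | ∃ u ∈ A, ∃ v ∈ A, C = {nLit (.P u), nLit (.R u v), pLit (.P v)} }

/-- (A24) `P[s]` (for the last index `t`). -/
def A24 (t : ℕ) : Set VClause := { C | C = {pLit (.P t)} }

end Ref

/-- The formula `REF(F, A)` with index set `A` (in place of `[s]`) and last index `t`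
(in the role of `s`): the clauses (A1)–(A21). -/
def REFA (F : CNFFam) (A : Finset ℕ) (t : ℕ) : Set VClause :=
  Ref.A1 F A ∪ Ref.A2 F A ∪ Ref.A3 A ∪ Ref.A4 A ∪ Ref.A5 F A ∪ Ref.A6 F A ∪
    Ref.A7 A ∪ Ref.A8 A ∪ Ref.A9 A ∪ Ref.A10 A ∪ Ref.A11 A ∪ Ref.A12 A ∪ Ref.A13 A ∪
    Ref.A14 A ∪ Ref.A15 F A ∪ Ref.A16 F A ∪ Ref.A17 F A ∪ Ref.A18 F A ∪ Ref.A19 F A ∪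
    Ref.A20 F A ∪ Ref.A21 F t

/-- The formula `REF(F, s)`. -/
def REF (F : CNFFam) (s : ℕ) : Set VClause := REFA F (Finset.Icc 1 s) s

/-- Relativization of a clause: add the literal `¬P[u]` for every index `u` mentioned
by a variable occurring in the clause. -/
def relCl (C : VClause) : VClause :=
  C ∪ (C.image (fun l => RefVar.idx l.1)).image (fun u => nLit (.P u))

/-- The formula `RREF(F, s)`: the relativized clauses of `REF(F,s)` together with the
clauses (A22), (A23) and (A24). -/
def RREF (F : CNFFam) (s : ℕ) : Set VClause :=
  (relCl '' REF F s) ∪ Ref.A22 (Finset.Icc 1 s) ∪ Ref.A23 (Finset.Icc 1 s) ∪ Ref.A24 s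

/-- `REF(F,s)` with the clauses of types (A7) and (A8) deleted. -/
def REFnoLR (F : CNFFam) (s : ℕ) : Set VClause :=
  Ref.A1 F (Finset.Icc 1 s) ∪ Ref.A2 F (Finset.Icc 1 s) ∪ Ref.A3 (Finset.Icc 1 s) ∪
    Ref.A4 (Finset.Icc 1 s) ∪ Ref.A5 F (Finset.Icc 1 s) ∪ Ref.A6 F (Finset.Icc 1 s) ∪
    Ref.A9 (Finset.Icc 1 s) ∪ Ref.A10 (Finset.Icc 1 s) ∪ Ref.A11 (Finset.Icc 1 s) ∪
    Ref.A12 (Finset.Icc 1 s) ∪ Ref.A13 (Finset.Icc 1 s) ∪ Ref.A14 (Finset.Icc 1 s) ∪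
    Ref.A15 F (Finset.Icc 1 s) ∪ Ref.A16 F (Finset.Icc 1 s) ∪ Ref.A17 F (Finset.Icc 1 s) ∪
    Ref.A18 F (Finset.Icc 1 s) ∪ Ref.A19 F (Finset.Icc 1 s) ∪ Ref.A20 F (Finset.Icc 1 s) ∪
    Ref.A21 F s

/-- `RREF'(F,s)`: obtained from `RREF(F,s)` by deleting the (relativized) clauses of
types (A7) and (A8). -/
def RREF' (F : CNFFam) (s : ℕ) : Set VClause :=
  (relCl '' REFnoLR F s) ∪ Ref.A22 (Finset.Icc 1 s) ∪ Ref.A23 (Finset.Icc 1 s) ∪ Ref.A24 s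

/-! ## Refutations as structures -/

/-- A structure `(D, V, I, L, R)` of the type of a length-`s` refutation. -/
structure RefStruct where
  Dr : ℕ → ℕ → Bool → Bool
  Vf : ℕ → ℕ
  If' : ℕ → ℕ
  Lf : ℕ → ℕ
  Rf : ℕ → ℕ

namespace RefStruct

/-- The typing conditions: `D ⊆ [s]×[n]×B`, `V : [s] → [n]∪{0}`, `I : [s] → [m]∪{0}`,
`L, R : [s] → [s]∪{0}`. -/
def WFOn (M : RefStruct) (s n m : ℕ) : Prop :=
  (∀ u i b, M.Dr u i b = true → u ∈ Finset.Icc 1 s ∧ i ∈ Finset.Icc 1 n) ∧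
  (∀ u ∈ Finset.Icc 1 s, M.Vf u ≤ n) ∧
  (∀ u ∈ Finset.Icc 1 s, M.If' u ≤ m) ∧
  (∀ u ∈ Finset.Icc 1 s, M.Lf u ≤ s) ∧
  (∀ u ∈ Finset.Icc 1 s, M.Rf u ≤ s)

/-- (R1)–(R8): the structure is a refutation of `F` of length `s`. -/
def IsRefutationOf (M : RefStruct) (F : CNFFam) (s : ℕ) : Prop :=
  ∀ u ∈ Finset.Icc 1 s,
    ((M.Vf u = 0 ∨ M.If' u = 0) ∧ ¬(M.Vf u = 0 ∧ M.If' u = 0)) ∧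
    (M.If' u = 0 → M.Lf u ≠ 0 ∧ M.Rf u ≠ 0) ∧
    (M.Lf u < u ∧ M.Rf u < u) ∧
    (∀ i ∈ Finset.Icc 1 F.n, ∀ v ∈ Finset.Icc 1 s,
      (M.Vf u = i → M.Lf u = v → M.Dr v i false = true) ∧
      (M.Vf u = i → M.Rf u = v → M.Dr v i true = true) ∧
      (∀ i' ∈ Finset.Icc 1 F.n, ∀ b : Bool,
        M.Vf u = i → i ≠ i' → M.Lf u = v → M.Dr v i' b = true → M.Dr u i' b = true) ∧
      (∀ i' ∈ Finset.Icc 1 F.n, ∀ b : Bool,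
        M.Vf u = i → i ≠ i' → M.Rf u = v → M.Dr v i' b = true → M.Dr u i' b = true)) ∧
    (∀ j ∈ Finset.Icc 1 F.m, ∀ i : ℕ, ∀ b : Bool,
      M.If' u = j → (i, b) ∈ F.Cl j → M.Dr u i b = true) ∧
    (∀ i ∈ Finset.Icc 1 F.n, ¬(M.Dr u i false = true ∧ M.Dr u i true = true)) ∧
    (∀ i ∈ Finset.Icc 1 F.n, ∀ b : Bool, M.Dr s i b = false)

/-- The truth assignment associated to a structure. -/
def assign (M : RefStruct) : RefVar → Bool
  | .D u i b => M.Dr u i b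
  | .V u i => M.Vf u == i
  | .I u j => M.If' u == j
  | .L u v => M.Lf u == v
  | .R u v => M.Rf u == v
  | .P _ => true

end RefStruct

/-! ## The full-tree refutation -/

/-- The level `h` of the node numbered `u` in the full binary tree with `n+1` levels. -/
def levelOf (n u : ℕ) : ℕ := Nat.log 2 (2 ^ (n + 1) - u)

/-- The value (position within its level, `a₁` most significant) of the node numbered `u`. -/
def valOf (n u : ℕ) : ℕ := u - (2 ^ (n + 1) + 1 - 2 ^ (levelOf n u + 1))

/-- The `i`-th bit `a_i` of the binary string `a` labelling the node numbered `u`. -/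
def digitOf (n u i : ℕ) : Bool := (valOf n u).testBit (levelOf n u - i)

/-- The clause `C_a = X_1^{(a_1)} ∨ ⋯ ∨ X_n^{(a_n)}` labelling the leaf numbered `u`. -/
def leafClause (F : CNFFam) (u : ℕ) : Clause ℕ :=
  (Finset.Icc 1 F.n).image (fun i => (i, digitOf F.n u i))

/-- The full-tree Resolution refutation `(D*, V*, I*, L*, R*)` of `F`,
of length `s* = 2^{n+1} - 1`. -/
noncomputable def fullTree (F : CNFFam) : RefStruct where
  Dr := fun u i b =>
    decide (1 ≤ u ∧ u ≤ 2 ^ (F.n + 1) - 1 ∧ 1 ≤ i ∧ i ≤ levelOf F.n u) &&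
      (digitOf F.n u i == b)
  Vf := fun u =>
    if 1 ≤ u ∧ u ≤ 2 ^ (F.n + 1) - 1 ∧ levelOf F.n u < F.n then levelOf F.n u + 1 else 0
  If' := fun u =>
    if 1 ≤ u ∧ u ≤ 2 ^ (F.n + 1) - 1 ∧ levelOf F.n u = F.n then
      sInf { j : ℕ | j ∈ Finset.Icc 1 F.m ∧ F.Cl j ⊆ leafClause F u }
    else 0
  Lf := fun u =>
    if 1 ≤ u ∧ u ≤ 2 ^ (F.n + 1) - 1 ∧ levelOf F.n u < F.n then
      2 ^ (F.n + 1) + 1 + 2 * valOf F.n u - 2 ^ (levelOf F.n u + 2)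
    else 0
  Rf := fun u =>
    if 1 ≤ u ∧ u ≤ 2 ^ (F.n + 1) - 1 ∧ levelOf F.n u < F.n then
      2 ^ (F.n + 1) + 2 + 2 * valOf F.n u - 2 ^ (levelOf F.n u + 2)
    else 0

/-! ## Blocks, the family 𝓗, and conditions -/

/-- The integer `k` with `2^k < 3w ≤ 2^{k+1}`. -/
def kOf (w : ℕ) : ℕ := Nat.log 2 (3 * w - 1)

/-- The block `B*_i` of `[s*]`, `s* = 2^{n+1} - 1`. -/
def Bstar (n w i : ℕ) : Finset ℕ :=
  let s' := 2 ^ (n + 1) - 1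
  let k := kOf w
  if i = 0 then Finset.Icc (s' - 2 ^ (k + 1) + 2) s'
  else Finset.Icc (s' + 2 - 2 ^ (k + 1 + i)) (s' - 2 ^ (k + i) + 1)

/-- The block `B_i` of `[s]`. -/
def Bblk (n s w i : ℕ) : Finset ℕ :=
  let k := kOf w
  if i = 0 then Finset.Icc (s - 2 ^ (k + 1) + 2) s
  else if i = n - k then Finset.Icc 1 (s - 2 ^ (k + 1) * (n - k) + 1)
  else Finset.Icc (s - 2 ^ (k + 1) * (i + 1) + 2) (s - 2 ^ (k + 1) * i + 1)

/-- The bijection `t : B_0 → B*_0`, `t(u) = u - s + s*`. -/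
def tmap (n s u : ℕ) : ℕ := u + (2 ^ (n + 1) - 1 - s)

/-- `h` (a set of pairs) is a partial function. -/
def pfun (h : Finset (ℕ × ℕ)) : Prop :=
  ∀ p ∈ h, ∀ q ∈ h, p.1 = q.1 → p.2 = q.2

/-- The domain of a partial function given as a set of pairs. -/
def pdom (h : Finset (ℕ × ℕ)) : Finset ℕ := h.image Prod.fst

/-- The image of a partial function given as a set of pairs. -/
def pimg (h : Finset (ℕ × ℕ)) : Finset ℕ := h.image Prod.snd

/-- Membership in the family `𝓗`: injective partial functions
`h : [s]∪{0} → [s*]∪{0}` satisfying (H1)–(H4). -/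
def memH (n s w : ℕ) (h : Finset (ℕ × ℕ)) : Prop :=
  pfun h ∧
  (∀ p ∈ h, p.1 ∈ insert 0 (Finset.Icc 1 s) ∧
    p.2 ∈ insert 0 (Finset.Icc 1 (2 ^ (n + 1) - 1))) ∧
  (∀ p ∈ h, ∀ q ∈ h, p.2 = q.2 → p.1 = q.1) ∧
  ((0, 0) ∈ h) ∧
  (∀ p ∈ h, p.1 ∈ Bblk n s w 0 → p.2 = tmap n s p.1) ∧
  (∀ p ∈ h, ∀ i ∈ Finset.Icc 1 (n - kOf w), p.1 ∈ Bblk n s w i → p.2 ∈ Bstar n w i)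

/-- `∂I = {L*(u) | u ∈ I∖{0}} ∪ {R*(u) | u ∈ I∖{0}}`. -/
noncomputable def bnd (F : CNFFam) (I : Finset ℕ) : Finset ℕ :=
  (I.erase 0).image (fullTree F).Lf ∪ (I.erase 0).image (fullTree F).Rf

/-- A condition: a pair `p = (g, h)` of members of `𝓗` with (C1) `g ⊆ h` and
(C2) `Img(h) = Img(g) ∪ ∂Img(g)`. -/
def IsCond (F : CNFFam) (s w : ℕ) (g h : Finset (ℕ × ℕ)) : Prop :=
  memH F.n s w g ∧ memH F.n s w h ∧ g ⊆ h ∧ pimg h = pimg g ∪ bnd F (pimg g)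

/-- Application of a partial function given as a set of pairs. -/
noncomputable def papp (g : Finset (ℕ × ℕ)) (u : ℕ) : ℕ := sInf { v : ℕ | (u, v) ∈ g }

/-- Inverse application of an (injective) partial function given as a set of pairs. -/
noncomputable def pinv (h : Finset (ℕ × ℕ)) (y : ℕ) : ℕ := sInf { u : ℕ | (u, y) ∈ h }

/-- The partial assignment `α(p)` determined by a condition `p = (g, h)`: it is defined
precisely on the variables (of `REF(F,s)`) mentioning some `u ∈ Dom(g) ∖ {0}`, where it is
read off from the full-tree refutation through `g` (and `h` for the `L`- and `R`-variables). -/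
noncomputable def alphaP (F : CNFFam) (g h : Finset (ℕ × ℕ)) : RefVar → Option Bool :=
  fun x =>
    if RefVar.idx x ∈ (pdom g).erase 0 then
      match x with
      | RefVar.D u i b => some ((fullTree F).assign (RefVar.D (papp g u) i b))
      | RefVar.V u i => some ((fullTree F).assign (RefVar.V (papp g u) i))
      | RefVar.I u j => some ((fullTree F).assign (RefVar.I (papp g u) j))
      | RefVar.L u v => some (decide (v = pinv h ((fullTree F).Lf (papp g u))))
      | RefVar.R u v => some (decide (v = pinv h ((fullTree F).Rf (papp g u))))
      | RefVar.P _ => none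
    else none

open scoped Classical in
/-- The restriction `p↾I` of a condition `p = (g,h)`: `g'` is the restriction of `g` to
`I ∪ {0}` and `h'` is the restriction of `h` with image `Img(g') ∪ ∂Img(g')`. -/
noncomputable def condRestrict (F : CNFFam) (g h : Finset (ℕ × ℕ)) (I : Finset ℕ) :
    Finset (ℕ × ℕ) × Finset (ℕ × ℕ) :=
  let g' := g.filter (fun p => p.1 ∈ insert 0 I)
  let h' := h.filter (fun p => p.2 ∈ pimg g' ∪ bnd F (pimg g'))
  (g', h')

/-! ## Auxiliary development for the lower bound -/

namespace AMG

/-- The clause bit of node `a`: `X_i^b` belongs to the clause labelling node `a`. -/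
def Dbit (a : List Bool) (i : ℕ) (b : Bool) : Prop :=
  1 ≤ i ∧ i ≤ a.length ∧ a.getD (i - 1) true = b

instance (a : List Bool) (i : ℕ) (b : Bool) : Decidable (Dbit a i b) := by
  unfold Dbit; infer_instance

/-- A canonical axiom of `F` contained in the clause of a full-length node `a`. -/
noncomputable def Jv (F : CNFFam) (a : List Bool) : ℕ :=
  sInf {j | j ∈ Finset.Icc 1 F.m ∧ ∀ l ∈ F.Cl j, Dbit a l.1 l.2}

lemma Jv_spec (F : CNFFam) (hWF : F.WF) (hunsat : ¬F.Sat) {a : List Bool}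
    (ha : a.length = F.n) :
    Jv F a ∈ Finset.Icc 1 F.m ∧ ∀ l ∈ F.Cl (Jv F a), Dbit a l.1 l.2 := by
  have hne : {j | j ∈ Finset.Icc 1 F.m ∧ ∀ l ∈ F.Cl j, Dbit a l.1 l.2}.Nonempty := by
    unfold CNFFam.Sat CnfSat at hunsat
    push_neg at hunsat
    obtain ⟨C, hC, hfal⟩ := hunsat (fun i => !(a.getD (i - 1) true))
    obtain ⟨j, hj, rfl⟩ := hC
    refine ⟨j, hj, fun l hl => ?_⟩
    have hi : l.1 ∈ Finset.Icc 1 F.n := ((hWF.1 j hj).2) l hl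
    have hb := hfal l hl
    refine ⟨(Finset.mem_Icc.mp hi).1, by rw [ha]; exact (Finset.mem_Icc.mp hi).2, ?_⟩
    cases hg : a.getD (l.1 - 1) true <;> cases hl2 : l.2 <;> simp_all
  exact Nat.sInf_mem hne

/-- A position of the game: a set of indices with node and child-slot data. -/
structure Pos where
  S : Finset ℕ
  nd : ℕ → List Bool
  lf : ℕ → ℕ
  rf : ℕ → ℕ

variable (F : CNFFam) (s w : ℕ)

/-- The resolved-variable value of a line. -/
def vval (β : Pos) (u : ℕ) : ℕ :=
  if (β.nd u).length < F.n then (β.nd u).length + 1 else 0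

/-- The axiom-index value of a line. -/
noncomputable def ival (β : Pos) (u : ℕ) : ℕ :=
  if (β.nd u).length = F.n then Jv F (β.nd u) else 0

/-- The Boolean value of a variable at a position. -/
noncomputable def val (β : Pos) : RefVar → Bool
  | .D u i b => decide (Dbit (β.nd u) i b)
  | .V u i => decide (i = vval F β u)
  | .I u j => decide (j = ival F β u)
  | .L u v => decide (v = β.lf u)
  | .R u v => decide (v = β.rf u)
  | .P _ => false

/-- The partial assignment determined by a position. -/
noncomputable def alph (β : Pos) (x : RefVar) : Option Bool :=
  if x.idx ∈ β.S then some (val F β x)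
  else if x.idx ∈ Finset.Icc 1 s then none else some false

/-- The invariant maintained on positions. -/
def Inv (β : Pos) : Prop :=
  β.S ⊆ Finset.Icc 1 s ∧
  (∀ u ∈ β.S, (β.nd u).length ≤ F.n ∧ (3*w+2) * (F.n - (β.nd u).length) < u) ∧
  (∀ u ∈ β.S, ((β.nd u).length = F.n → β.lf u = 0 ∧ β.rf u = 0) ∧
    ((β.nd u).length < F.n →
      ((3*w+2) * (F.n - (β.nd u).length - 1) < β.lf u ∧ β.lf u < u) ∧
      ((3*w+2) * (F.n - (β.nd u).length - 1) < β.rf u ∧ β.rf u < u))) ∧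
  (∀ u ∈ β.S, ∀ v ∈ β.S, (β.nd u).length < F.n →
      (β.lf u = v → β.nd v = β.nd u ++ [false]) ∧ (β.rf u = v → β.nd v = β.nd u ++ [true])) ∧
  (∀ u ∈ β.S, ∀ u' ∈ β.S, (β.nd u).length < F.n → (β.nd u').length < F.n →
      (β.lf u = β.lf u' → β.nd u = β.nd u') ∧ (β.rf u = β.rf u' → β.nd u = β.nd u') ∧
      β.lf u ≠ β.rf u') ∧
  (s ∈ β.S → β.nd s = [])

lemma alph_eq_some {β : Pos} {x : RefVar} {c : Bool} (hx : x.idx ∈ Finset.Icc 1 s)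
    (h : alph F s β x = some c) : x.idx ∈ β.S ∧ val F β x = c := by
  unfold alph at h
  by_cases hS : x.idx ∈ β.S
  · simp only [hS, if_true, Option.some.injEq] at h; exact ⟨hS, h⟩
  · simp [hS, hx] at h

lemma Inv_subset {β : Pos} (hInv : Inv F s w β) {S' : Finset ℕ} (hS' : S' ⊆ β.S) :
    Inv F s w ⟨S', β.nd, β.lf, β.rf⟩ := by
  obtain ⟨h1, h2, h3, h4, h5, h6⟩ := hInv
  exact ⟨fun u hu => h1 (hS' hu), fun u hu => h2 u (hS' hu), fun u hu => h3 u (hS' hu),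
    fun u hu v hv => h4 u (hS' hu) v (hS' hv), fun u hu v hv => h5 u (hS' hu) v (hS' hv),
    fun hs => h6 (hS' hs)⟩

end AMG
namespace AMG

variable (F : CNFFam) (s w : ℕ)

lemma slot_pos {a b c : ℕ} (h : a * b < c) : 1 ≤ c := lt_of_le_of_lt (Nat.zero_le _) h


lemma fals_lit {β : Pos} {C : VClause} (hF : Clause.FalsByR (alph F s β) C)
    {x : RefVar} {b : Bool} (hmem : (x, b) ∈ C) (hx : x.idx ∈ Finset.Icc 1 s) :
    x.idx ∈ β.S ∧ val F β x = !b :=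
  alph_eq_some F s hx (hF (x, b) hmem)

lemma ival_zero (hWF : F.WF) (hunsat : ¬F.Sat) {β : Pos} {u : ℕ}
    (hle : (β.nd u).length ≤ F.n) (h : ival F β u = 0) : (β.nd u).length < F.n := by
  unfold ival at h
  split at h
  · exfalso
    have := (Jv_spec F hWF hunsat ‹_›).1
    simp [Finset.mem_Icc] at this
    omega
  · omega

lemma not_fals_axiom (hWF : F.WF) (hn : 1 ≤ F.n) (hs : 1 ≤ s) (hunsat : ¬F.Sat) {β : Pos}
    (hInv : Inv F s w β) {C : VClause} (hC : C ∈ REF F s) :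
    ¬ Clause.FalsByR (alph F s β) C := by
  obtain ⟨hSub, hLen, hSlot, hFun, hInj, hRoot⟩ := hInv
  intro hF
  simp only [REF, REFA, Set.mem_union] at hC
  obtain ((((((((((((((((((((h|h)|h)|h)|h)|h)|h)|h)|h)|h)|h)|h)|h)|h)|h)|h)|h)|h)|h)|h)|h) := hC
  -- A1
  · obtain ⟨u, hu, rfl⟩ := h
    have hv : vval F β u ∈ Finset.range (F.n + 1) := by
      unfold vval; split <;> simp <;> omega
    have h1 := fals_lit F s hF (x := RefVar.V u (vval F β u)) (b := true)
      (Finset.mem_image_of_mem _ hv)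
      (hu)
    simp [val, pLit] at h1
  -- A2
  · obtain ⟨u, hu, rfl⟩ := h
    have hv : ival F β u ∈ Finset.range (F.m + 1) := by
      unfold ival; split
      · have := (Jv_spec F hWF hunsat ‹_›).1
        simp [Finset.mem_Icc] at this
        simp; omega
      · simp
    have h1 := fals_lit F s hF (x := RefVar.I u (ival F β u)) (b := true)
      (Finset.mem_image_of_mem _ hv)
      (hu)
    simp [val, pLit] at h1
  -- A3
  · obtain ⟨u, hu, rfl⟩ := h
    have h0 := fals_lit F s hF (x := RefVar.L u 0) (b := true)
      (Finset.mem_image_of_mem _ (Finset.mem_insert_self 0 _)) (hu)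
    have hlf : β.lf u ∈ insert 0 (Finset.Icc 1 s) := by
      rcases lt_or_eq_of_le (hLen u h0.1).1 with hlt | heq
      · have h2 := ((hSlot u h0.1).2 hlt).1
        have h3 := slot_pos h2.1
        have hus := Finset.mem_Icc.mp hu
        simp only [Finset.mem_insert, Finset.mem_Icc]
        omega
      · simp [((hSlot u h0.1).1 heq).1]
    have h1 := fals_lit F s hF (x := RefVar.L u (β.lf u)) (b := true)
      (Finset.mem_image_of_mem _ hlf)
      (hu)
    simp [val, pLit] at h1
  -- A4
  · obtain ⟨u, hu, rfl⟩ := h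
    have h0 := fals_lit F s hF (x := RefVar.R u 0) (b := true)
      (Finset.mem_image_of_mem _ (Finset.mem_insert_self 0 _)) (hu)
    have hrf : β.rf u ∈ insert 0 (Finset.Icc 1 s) := by
      rcases lt_or_eq_of_le (hLen u h0.1).1 with hlt | heq
      · have h2 := ((hSlot u h0.1).2 hlt).2
        have h3 := slot_pos h2.1
        have hus := Finset.mem_Icc.mp hu
        simp only [Finset.mem_insert, Finset.mem_Icc]
        omega
      · simp [((hSlot u h0.1).1 heq).2]
    have h1 := fals_lit F s hF (x := RefVar.R u (β.rf u)) (b := true)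
      (Finset.mem_image_of_mem _ hrf)
      (hu)
    simp [val, pLit] at h1
  -- A5
  · obtain ⟨u, hu, i, hi, i', hi', hne, rfl⟩ := h
    have h1 := fals_lit F s hF (x := RefVar.V u i) (b := false)
      (by simp [nLit])
      (hu)
    have h2 := fals_lit F s hF (x := RefVar.V u i') (b := false)
      (by simp [nLit])
      (hu)
    simp [val, nLit] at h1 h2
    exact hne (h1.2.trans h2.2.symm)
  -- A6
  · obtain ⟨u, hu, i, hi, i', hi', hne, rfl⟩ := h
    have h1 := fals_lit F s hF (x := RefVar.I u i) (b := false)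
      (by simp [nLit])
      (hu)
    have h2 := fals_lit F s hF (x := RefVar.I u i') (b := false)
      (by simp [nLit])
      (hu)
    simp [val, nLit] at h1 h2
    exact hne (h1.2.trans h2.2.symm)
  -- A7
  · obtain ⟨u, hu, i, hi, i', hi', hne, rfl⟩ := h
    have h1 := fals_lit F s hF (x := RefVar.L u i) (b := false)
      (by simp [nLit])
      (hu)
    have h2 := fals_lit F s hF (x := RefVar.L u i') (b := false)
      (by simp [nLit])
      (hu)
    simp [val, nLit] at h1 h2
    exact hne (h1.2.trans h2.2.symm)
  -- A8
  · obtain ⟨u, hu, i, hi, i', hi', hne, rfl⟩ := h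
    have h1 := fals_lit F s hF (x := RefVar.R u i) (b := false)
      (by simp [nLit])
      (hu)
    have h2 := fals_lit F s hF (x := RefVar.R u i') (b := false)
      (by simp [nLit])
      (hu)
    simp [val, nLit] at h1 h2
    exact hne (h1.2.trans h2.2.symm)
  -- A9
  · obtain ⟨u, hu, rfl⟩ := h
    have h1 := fals_lit F s hF (x := RefVar.I u 0) (b := false)
      (by simp [nLit])
      (hu)
    have h2 := fals_lit F s hF (x := RefVar.V u 0) (b := false)
      (by simp [nLit])
      (hu)
    simp [val, nLit] at h1 h2
    have hlt := ival_zero F hWF hunsat (hLen u h1.1).1 h1.2.symm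
    simp [vval, hlt] at h2
  -- A10
  · obtain ⟨u, hu, rfl⟩ := h
    have h1 := fals_lit F s hF (x := RefVar.I u 0) (b := true)
      (by simp [pLit])
      (hu)
    have h2 := fals_lit F s hF (x := RefVar.V u 0) (b := true)
      (by simp [pLit])
      (hu)
    simp [val, pLit] at h1 h2
    rcases lt_or_eq_of_le (hLen u h1.1).1 with hlt | heq
    · exact h1.2 (by simp [ival, Nat.ne_of_lt hlt])
    · exact h2.2 (by simp [vval, heq])
  -- A11
  · obtain ⟨u, hu, rfl⟩ := h
    have h1 := fals_lit F s hF (x := RefVar.I u 0) (b := false)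
      (by simp [nLit])
      (hu)
    have h2 := fals_lit F s hF (x := RefVar.L u 0) (b := false)
      (by simp [nLit])
      (hu)
    simp [val, nLit] at h1 h2
    have hlt := ival_zero F hWF hunsat (hLen u h1.1).1 h1.2.symm
    have h3 := slot_pos (((hSlot u h1.1).2 hlt).1).1
    omega
  -- A12
  · obtain ⟨u, hu, rfl⟩ := h
    have h1 := fals_lit F s hF (x := RefVar.I u 0) (b := false)
      (by simp [nLit])
      (hu)
    have h2 := fals_lit F s hF (x := RefVar.R u 0) (b := false)
      (by simp [nLit])
      (hu)
    simp [val, nLit] at h1 h2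
    have hlt := ival_zero F hWF hunsat (hLen u h1.1).1 h1.2.symm
    have h3 := slot_pos (((hSlot u h1.1).2 hlt).2).1
    omega
  -- A13
  · obtain ⟨u, hu, v, hv, huv, rfl⟩ := h
    have h1 := fals_lit F s hF (x := RefVar.L u v) (b := false)
      (by simp [nLit])
      (hu)
    simp [val, nLit] at h1
    have hv1 := (Finset.mem_Icc.mp hv).1
    rcases lt_or_eq_of_le (hLen u h1.1).1 with hlt | heq
    · have := ((hSlot u h1.1).2 hlt).1.2
      omega
    · have := ((hSlot u h1.1).1 heq).1
      omega
  -- A14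
  · obtain ⟨u, hu, v, hv, huv, rfl⟩ := h
    have h1 := fals_lit F s hF (x := RefVar.R u v) (b := false)
      (by simp [nLit])
      (hu)
    simp [val, nLit] at h1
    have hv1 := (Finset.mem_Icc.mp hv).1
    rcases lt_or_eq_of_le (hLen u h1.1).1 with hlt | heq
    · have := ((hSlot u h1.1).2 hlt).2.2
      omega
    · have := ((hSlot u h1.1).1 heq).2
      omega
  -- A15
  · obtain ⟨u, hu, v, hv, i, hi, rfl⟩ := h
    have h1 := fals_lit F s hF (x := RefVar.L u v) (b := false)
      (by simp [nLit, pLit])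
      (hu)
    have h2 := fals_lit F s hF (x := RefVar.V u i) (b := false)
      (by simp [nLit, pLit])
      (hu)
    have h3 := fals_lit F s hF (x := RefVar.D v i false) (b := true)
      (by simp [nLit, pLit])
      (hv)
    simp [val, nLit, pLit] at h1 h2 h3
    have hvpos := (Finset.mem_Icc.mp hv).1
    have hlt : (β.nd u).length < F.n := by
      rcases lt_or_eq_of_le (hLen u h1.1).1 with hlt | heq
      · exact hlt
      · exfalso; have := ((hSlot u h1.1).1 heq).1; omega
    have hnd := ((hFun u h1.1 v h3.1) hlt).1 h1.2.symm
    simp [vval, hlt] at h2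
    apply h3.2
    rw [hnd, h2.2]
    refine ⟨by omega, by simp, ?_⟩
    simp [List.getD_eq_getElem?_getD, List.getElem?_concat_length]
  -- A16
  · obtain ⟨u, hu, v, hv, i, hi, rfl⟩ := h
    have h1 := fals_lit F s hF (x := RefVar.R u v) (b := false)
      (by simp [nLit, pLit])
      (hu)
    have h2 := fals_lit F s hF (x := RefVar.V u i) (b := false)
      (by simp [nLit, pLit])
      (hu)
    have h3 := fals_lit F s hF (x := RefVar.D v i true) (b := true)
      (by simp [nLit, pLit])
      (hv)
    simp [val, nLit, pLit] at h1 h2 h3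
    have hvpos := (Finset.mem_Icc.mp hv).1
    have hlt : (β.nd u).length < F.n := by
      rcases lt_or_eq_of_le (hLen u h1.1).1 with hlt | heq
      · exact hlt
      · exfalso; have := ((hSlot u h1.1).1 heq).2; omega
    have hnd := ((hFun u h1.1 v h3.1) hlt).2 h1.2.symm
    simp [vval, hlt] at h2
    apply h3.2
    rw [hnd, h2.2]
    refine ⟨by omega, by simp, ?_⟩
    simp [List.getD_eq_getElem?_getD, List.getElem?_concat_length]
  -- A17
  · obtain ⟨u, hu, v, hv, i, hi, i', hi', b, hne, rfl⟩ := h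
    have h1 := fals_lit F s hF (x := RefVar.L u v) (b := false)
      (by simp [nLit, pLit])
      (hu)
    have h2 := fals_lit F s hF (x := RefVar.V u i) (b := false)
      (by simp [nLit, pLit])
      (hu)
    have h3 := fals_lit F s hF (x := RefVar.D v i' b) (b := false)
      (by simp [nLit, pLit])
      (hv)
    have h4 := fals_lit F s hF (x := RefVar.D u i' b) (b := true)
      (by simp [nLit, pLit])
      (hu)
    simp [val, nLit, pLit] at h1 h2 h3 h4
    have hvpos := (Finset.mem_Icc.mp hv).1
    have hlt : (β.nd u).length < F.n := by
      rcases lt_or_eq_of_le (hLen u h1.1).1 with hlt | heq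
      · exact hlt
      · exfalso; have := ((hSlot u h1.1).1 heq).1; omega
    have hnd := ((hFun u h1.1 v h3.1) hlt).1 h1.2.symm
    simp [vval, hlt] at h2
    obtain ⟨hb1, hb2, hb3⟩ := h3.2
    rw [hnd] at hb2 hb3
    simp at hb2
    have hile : i' ≤ (β.nd u).length := by omega
    apply h4.2
    refine ⟨hb1, hile, ?_⟩
    rw [← hb3]
    have : i' - 1 < (β.nd u).length := by omega
    simp [List.getD_eq_getElem?_getD, List.getElem?_append, this]
  -- A18
  · obtain ⟨u, hu, v, hv, i, hi, i', hi', b, hne, rfl⟩ := h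
    have h1 := fals_lit F s hF (x := RefVar.R u v) (b := false)
      (by simp [nLit, pLit])
      (hu)
    have h2 := fals_lit F s hF (x := RefVar.V u i) (b := false)
      (by simp [nLit, pLit])
      (hu)
    have h3 := fals_lit F s hF (x := RefVar.D v i' b) (b := false)
      (by simp [nLit, pLit])
      (hv)
    have h4 := fals_lit F s hF (x := RefVar.D u i' b) (b := true)
      (by simp [nLit, pLit])
      (hu)
    simp [val, nLit, pLit] at h1 h2 h3 h4
    have hvpos := (Finset.mem_Icc.mp hv).1
    have hlt : (β.nd u).length < F.n := by
      rcases lt_or_eq_of_le (hLen u h1.1).1 with hlt | heq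
      · exact hlt
      · exfalso; have := ((hSlot u h1.1).1 heq).2; omega
    have hnd := ((hFun u h1.1 v h3.1) hlt).2 h1.2.symm
    simp [vval, hlt] at h2
    obtain ⟨hb1, hb2, hb3⟩ := h3.2
    rw [hnd] at hb2 hb3
    simp at hb2
    have hile : i' ≤ (β.nd u).length := by omega
    apply h4.2
    refine ⟨hb1, hile, ?_⟩
    rw [← hb3]
    have : i' - 1 < (β.nd u).length := by omega
    simp [List.getD_eq_getElem?_getD, List.getElem?_append, this]
  -- A19
  · obtain ⟨u, hu, j, hj, i, b, hmem, rfl⟩ := h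
    have h1 := fals_lit F s hF (x := RefVar.I u j) (b := false)
      (by simp [nLit, pLit])
      (hu)
    have h2 := fals_lit F s hF (x := RefVar.D u i b) (b := true)
      (by simp [nLit, pLit])
      (hu)
    simp [val, nLit, pLit] at h1 h2
    have hj1 := (Finset.mem_Icc.mp hj).1
    unfold ival at h1
    rcases h1 with ⟨_, h1⟩
    split at h1
    · apply h2.2
      have := (Jv_spec F hWF hunsat ‹_›).2 (i, b) (by rw [← h1]; exact hmem)
      exact this
    · omega
  -- A20
  · obtain ⟨u, hu, i, hi, rfl⟩ := h
    have h1 := fals_lit F s hF (x := RefVar.D u i false) (b := false)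
      (by simp [nLit])
      (hu)
    have h2 := fals_lit F s hF (x := RefVar.D u i true) (b := false)
      (by simp [nLit])
      (hu)
    simp [val, nLit] at h1 h2
    obtain ⟨_, _, e1⟩ := h1.2
    obtain ⟨_, _, e2⟩ := h2.2
    rw [e1] at e2
    exact Bool.false_ne_true e2
  -- A21
  · obtain ⟨i, hi, b, rfl⟩ := h
    have h1 := fals_lit F s hF (x := RefVar.D s i b) (b := false)
      (by simp [nLit])
      ((by simp [RefVar.idx, Finset.mem_Icc]; omega))
    simp [val, nLit] at h1
    have := hRoot h1.1
    obtain ⟨e1, e2, _⟩ := h1.2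
    rw [this] at e2
    simp at e2
    omega

end AMG
namespace AMG

variable (F : CNFFam) (s w : ℕ)

/-- The set of indices used by a position (domain and slots). -/
def used (β : Pos) : Finset ℕ := β.S ∪ β.S.image β.lf ∪ β.S.image β.rf

lemma used_card (β : Pos) : (used β).card ≤ 3 * β.S.card := by
  have h1 := Finset.card_union_le (β.S ∪ β.S.image β.lf) (β.S.image β.rf)
  have h2 := Finset.card_union_le β.S (β.S.image β.lf)
  have h3 := Finset.card_image_le (s := β.S) (f := β.lf)
  have h4 := Finset.card_image_le (s := β.S) (f := β.rf)
  unfold used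
  omega

lemma two_fresh {U : Finset ℕ} {lo hi : ℕ} (h : U.card + 2 ≤ hi - lo - 1) :
    ∃ l r, (lo < l ∧ l < hi) ∧ (lo < r ∧ r < hi) ∧ l ∉ U ∧ r ∉ U ∧ l ≠ r := by
  have h1 := Finset.le_card_sdiff U (Finset.Ioo lo hi)
  rw [Nat.card_Ioo] at h1
  obtain ⟨l, hl, r, hr, hlr⟩ := Finset.one_lt_card.mp (by omega : 1 < ((Finset.Ioo lo hi) \ U).card)
  simp only [Finset.mem_sdiff, Finset.mem_Ioo] at hl hr
  exact ⟨l, r, hl.1, hr.1, hl.2, hr.2, hlr⟩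

lemma slots_exist {β : Pos} (hcard : β.S.card < w) {lo i0 : ℕ}
    (h : lo + (3*w+2) ≤ i0) :
    ∃ l r, (lo < l ∧ l < i0) ∧ (lo < r ∧ r < i0) ∧ l ∉ used β ∧ r ∉ used β ∧ l ≠ r := by
  apply two_fresh
  have := used_card β
  omega

lemma add_entry {β : Pos} (hInv : Inv F s w β) {i0 : ℕ} (hi0 : i0 ∈ Finset.Icc 1 s)
    (hi0S : i0 ∉ β.S) {a : List Bool} {l0 r0 : ℕ}
    (hlen : a.length ≤ F.n) (hsafe : (3*w+2) * (F.n - a.length) < i0)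
    (hleaf : a.length = F.n → l0 = 0 ∧ r0 = 0)
    (hint : a.length < F.n →
      ((3*w+2) * (F.n - a.length - 1) < l0 ∧ l0 < i0) ∧
      ((3*w+2) * (F.n - a.length - 1) < r0 ∧ r0 < i0) ∧
      l0 ∉ used β ∧ r0 ∉ used β ∧ l0 ≠ r0)
    (hpar : ∀ p ∈ β.S, (β.nd p).length < F.n →
      (β.lf p = i0 → a = β.nd p ++ [false]) ∧ (β.rf p = i0 → a = β.nd p ++ [true]))
    (hroots : i0 = s → a = []) :
    Inv F s w ⟨insert i0 β.S, Function.update β.nd i0 a,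
      Function.update β.lf i0 l0, Function.update β.rf i0 r0⟩ := by
  obtain ⟨hSub, hLen, hSlot, hFun, hInj, hRoot⟩ := hInv
  have hSused : β.S ⊆ used β := fun x hx =>
    Finset.mem_union_left _ (Finset.mem_union_left _ hx)
  have hLused : ∀ p ∈ β.S, β.lf p ∈ used β := fun p hp =>
    Finset.mem_union_left _ (Finset.mem_union_right _ (Finset.mem_image_of_mem _ hp))
  have hRused : ∀ p ∈ β.S, β.rf p ∈ used β := fun p hp =>
    Finset.mem_union_right _ (Finset.mem_image_of_mem _ hp)
  have hmem : ∀ u : ℕ, u ∈ insert i0 β.S → u ≠ i0 → u ∈ β.S := by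
    intro u hu hne
    rcases Finset.mem_insert.mp hu with e | h
    · exact absurd e hne
    · exact h
  refine ⟨?_, ?_, ?_, ?_, ?_, ?_⟩
  · intro u hu
    dsimp only at hu
    rcases Finset.mem_insert.mp hu with rfl | hu
    · exact hi0
    · exact hSub hu
  · intro u hu
    dsimp only at hu ⊢
    by_cases e : u = i0
    · subst e
      rw [Function.update_self]
      exact ⟨hlen, hsafe⟩
    · rw [Function.update_of_ne e]
      exact hLen u (hmem u hu e)
  · intro u hu
    dsimp only at hu ⊢
    by_cases e : u = i0
    · subst e
      rw [Function.update_self, Function.update_self, Function.update_self]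
      exact ⟨hleaf, fun hlt => ⟨(hint hlt).1, (hint hlt).2.1⟩⟩
    · rw [Function.update_of_ne e, Function.update_of_ne e, Function.update_of_ne e]
      exact hSlot u (hmem u hu e)
  · intro u hu v hv
    dsimp only at hu hv ⊢
    by_cases e : u = i0 <;> by_cases e' : v = i0
    · subst e; subst e'
      rw [Function.update_self, Function.update_self, Function.update_self]
      intro hlt
      constructor
      · intro hH; exfalso; have := ((hint hlt).1).2; omega
      · intro hH; exfalso; have := ((hint hlt).2.1).2; omega
    · subst e
      have hv' := hmem v hv e'
      rw [Function.update_self, Function.update_self, Function.update_self,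
        Function.update_of_ne e']
      intro hlt
      constructor
      · intro hH; exfalso; exact (hint hlt).2.2.1 (hH ▸ hSused hv')
      · intro hH; exfalso; exact (hint hlt).2.2.2.1 (hH ▸ hSused hv')
    · subst e'
      have hu' := hmem u hu e
      rw [Function.update_self, Function.update_of_ne e, Function.update_of_ne e,
        Function.update_of_ne e]
      intro hlt
      exact ⟨fun hH => (hpar u hu' hlt).1 hH, fun hH => (hpar u hu' hlt).2 hH⟩
    · have hu' := hmem u hu e
      have hv' := hmem v hv e'
      rw [Function.update_of_ne e, Function.update_of_ne e, Function.update_of_ne e,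
        Function.update_of_ne e']
      exact hFun u hu' v hv'
  · intro u hu u' hu'
    dsimp only at hu hu' ⊢
    by_cases e : u = i0 <;> by_cases e' : u' = i0
    · subst e; subst e'
      rw [Function.update_self, Function.update_self, Function.update_self]
      intro hlt _
      exact ⟨fun _ => rfl, fun _ => rfl, (hint hlt).2.2.2.2⟩
    · subst e
      have hu'' := hmem u' hu' e'
      rw [Function.update_self, Function.update_self, Function.update_self,
        Function.update_of_ne e', Function.update_of_ne e', Function.update_of_ne e']
      intro hlt _
      refine ⟨?_, ?_, ?_⟩
      · intro hH; exfalso; exact (hint hlt).2.2.1 (hH ▸ hLused u' hu'')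
      · intro hH; exfalso; exact (hint hlt).2.2.2.1 (hH ▸ hRused u' hu'')
      · intro hH; exact (hint hlt).2.2.1 (hH ▸ hRused u' hu'')
    · subst e'
      have hu'' := hmem u hu e
      rw [Function.update_self, Function.update_self, Function.update_self,
        Function.update_of_ne e, Function.update_of_ne e, Function.update_of_ne e]
      intro _ hlt'
      refine ⟨?_, ?_, ?_⟩
      · intro hH; exfalso; exact (hint hlt').2.2.1 (hH ▸ hLused u hu'')
      · intro hH; exfalso; exact (hint hlt').2.2.2.1 (hH ▸ hRused u hu'')
      · intro hH; exact (hint hlt').2.2.2.1 (hH ▸ hLused u hu'')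
    · have h1 := hmem u hu e
      have h2 := hmem u' hu' e'
      rw [Function.update_of_ne e, Function.update_of_ne e, Function.update_of_ne e,
        Function.update_of_ne e', Function.update_of_ne e', Function.update_of_ne e']
      exact hInj u h1 u' h2
  · intro hsmem
    dsimp only at hsmem ⊢
    by_cases e : s = i0
    · rw [e, Function.update_self]
      exact hroots e.symm
    · rw [Function.update_of_ne e]
      exact hRoot (hmem s hsmem e)

lemma alph_extends {β : Pos} {i0 : ℕ} (hi0 : i0 ∈ Finset.Icc 1 s) (hi0S : i0 ∉ β.S)
    (a : List Bool) (l0 r0 : ℕ) :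
    optExtends (alph F s β) (alph F s ⟨insert i0 β.S, Function.update β.nd i0 a,
      Function.update β.lf i0 l0, Function.update β.rf i0 r0⟩) := by
  intro x b h
  unfold alph at h ⊢
  dsimp only at h ⊢
  by_cases hx : x.idx ∈ β.S
  · have hnei : x.idx ≠ i0 := fun e => hi0S (e ▸ hx)
    have hx' : x.idx ∈ insert i0 β.S := Finset.mem_insert_of_mem hx
    have hval : val F ⟨insert i0 β.S, Function.update β.nd i0 a,
        Function.update β.lf i0 l0, Function.update β.rf i0 r0⟩ x = val F β x := by
      cases x <;> simp only [RefVar.idx] at hnei <;>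
        simp [val, vval, ival, Function.update_of_ne hnei] <;> rfl
    simp only [hx, if_true] at h
    simp only [hx', if_true, hval]
    exact h
  · by_cases hicc : x.idx ∈ Finset.Icc 1 s
    · simp [hx, hicc] at h
    · have hnei : x.idx ≠ i0 := fun e => hicc (e ▸ hi0)
      have hx' : x.idx ∉ insert i0 β.S := by
        simp only [Finset.mem_insert]
        rintro (e | e)
        · exact hnei e
        · exact hx e
      simp only [hx, hicc, if_false] at h
      simp only [hx', hicc, if_false]
      exact h

lemma extend (hn : 1 ≤ F.n) (hw : 1 ≤ w) (hlow : 6 * F.n * w ≤ s) {β : Pos}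
    (hInv : Inv F s w β) (hcard : β.S.card < w) (i0 : ℕ) :
    ∃ β' : Pos, Inv F s w β' ∧ β'.S.card ≤ w ∧
      optExtends (alph F s β) (alph F s β') ∧ (i0 ∈ Finset.Icc 1 s → i0 ∈ β'.S) := by
  by_cases hicc : i0 ∈ Finset.Icc 1 s
  swap
  · exact ⟨β, hInv, le_of_lt hcard, fun x b h => h, fun h => absurd h hicc⟩
  by_cases hS : i0 ∈ β.S
  · exact ⟨β, hInv, le_of_lt hcard, fun x b h => h, fun _ => hS⟩
  have hkey : (3*w+2) * F.n < s := by
    have h2 : (3*w+2) * F.n < (6*w) * F.n :=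
      (Nat.mul_lt_mul_right (show 0 < F.n by omega)).mpr (by omega)
    have h3 : (6*w) * F.n = 6 * F.n * w := by ring
    omega
  obtain ⟨hSub, hLen, hSlot, hFun, hInj, hRoot⟩ := hInv
  have hInv' : Inv F s w β := ⟨hSub, hLen, hSlot, hFun, hInj, hRoot⟩
  -- helper for the expansion of the window bound
  have hexp : ∀ k : ℕ, 1 ≤ k → (3*w+2) * (k-1) + (3*w+2) = (3*w+2) * k := by
    intro k hk
    have : k - 1 + 1 = k := by omega
    calc (3*w+2) * (k-1) + (3*w+2) = (3*w+2) * (k-1+1) := by rw [Nat.mul_succ]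
      _ = (3*w+2) * k := by rw [this]
  have main : ∀ a : List Bool, a.length ≤ F.n → (3*w+2) * (F.n - a.length) < i0 →
      (∀ p ∈ β.S, (β.nd p).length < F.n →
        (β.lf p = i0 → a = β.nd p ++ [false]) ∧ (β.rf p = i0 → a = β.nd p ++ [true])) →
      (i0 = s → a = []) →
      ∃ β' : Pos, Inv F s w β' ∧ β'.S.card ≤ w ∧
        optExtends (alph F s β) (alph F s β') ∧ (i0 ∈ Finset.Icc 1 s → i0 ∈ β'.S) := by
    intro a hlen hsafe hpar hroots
    have hcard' : (insert i0 β.S).card ≤ w := by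
      have := Finset.card_insert_le i0 β.S
      omega
    rcases Nat.lt_or_ge a.length F.n with hlt | hge
    · -- internal node: choose two fresh slots
      have hwin : (3*w+2) * (F.n - a.length - 1) + (3*w+2) ≤ i0 := by
        have he := hexp (F.n - a.length) (by omega)
        have : F.n - a.length - 1 = F.n - a.length - 1 := rfl
        omega
      obtain ⟨l0, r0, hl, hr, hlU, hrU, hlr⟩ := slots_exist w hcard hwin
      refine ⟨⟨insert i0 β.S, Function.update β.nd i0 a,
        Function.update β.lf i0 l0, Function.update β.rf i0 r0⟩, ?_, hcard', ?_, ?_⟩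
      · exact add_entry F s w hInv' hicc hS hlen hsafe
          (fun e => absurd e (by omega)) (fun _ => ⟨hl, hr, hlU, hrU, hlr⟩) hpar hroots
      · exact alph_extends F s hicc hS a l0 r0
      · intro _; exact Finset.mem_insert_self _ _
    · -- leaf node
      have heq : a.length = F.n := le_antisymm hlen hge
      refine ⟨⟨insert i0 β.S, Function.update β.nd i0 a,
        Function.update β.lf i0 0, Function.update β.rf i0 0⟩, ?_, hcard', ?_, ?_⟩
      · exact add_entry F s w hInv' hicc hS hlen hsafe
          (fun _ => ⟨rfl, rfl⟩) (fun e => absurd e (by omega)) hpar hroots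
      · exact alph_extends F s hicc hS a 0 0
      · intro _; exact Finset.mem_insert_self _ _
  by_cases hL : ∃ p ∈ β.S, (β.nd p).length < F.n ∧ β.lf p = i0
  · obtain ⟨p, hp, hplen, hpe⟩ := hL
    have hps := Finset.mem_Icc.mp (hSub hp)
    have hslot := (hSlot p hp).2 hplen
    apply main (β.nd p ++ [false])
    · simp only [List.length_append, List.length_cons, List.length_nil]
      omega
    · have e : F.n - (β.nd p ++ [false]).length = F.n - (β.nd p).length - 1 := by
        simp only [List.length_append, List.length_cons, List.length_nil]
        omega
      rw [e]
      have := hslot.1.1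
      omega
    · intro q hq hqlen
      constructor
      · intro e
        have := (hInj q hq p hp hqlen hplen).1 (e.trans hpe.symm)
        rw [this]
      · intro e
        exfalso
        exact (hInj p hp q hq hplen hqlen).2.2 (hpe.trans e.symm)
    · intro e
      exfalso
      have := hslot.1.2
      omega
  by_cases hR : ∃ p ∈ β.S, (β.nd p).length < F.n ∧ β.rf p = i0
  · obtain ⟨p, hp, hplen, hpe⟩ := hR
    have hps := Finset.mem_Icc.mp (hSub hp)
    have hslot := (hSlot p hp).2 hplen
    apply main (β.nd p ++ [true])
    · simp only [List.length_append, List.length_cons, List.length_nil]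
      omega
    · have e : F.n - (β.nd p ++ [true]).length = F.n - (β.nd p).length - 1 := by
        simp only [List.length_append, List.length_cons, List.length_nil]
        omega
      rw [e]
      have := hslot.2.1
      omega
    · intro q hq hqlen
      constructor
      · intro e
        exfalso
        exact (hInj q hq p hp hqlen hplen).2.2 (e.trans hpe.symm)
      · intro e
        have := (hInj q hq p hp hqlen hplen).2.1 (e.trans hpe.symm)
        rw [this]
    · intro e
      exfalso
      have := hslot.2.2
      omega
  by_cases hrt : i0 = s
  · apply main []
    · simp
    · simp only [List.length_nil, Nat.sub_zero]
      omega
    · intro q hq hqlen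
      have hqs := Finset.mem_Icc.mp (hSub hq)
      have hslot := (hSlot q hq).2 hqlen
      constructor
      · intro e; exfalso; exact hL ⟨q, hq, hqlen, e⟩
      · intro e; exfalso; exact hR ⟨q, hq, hqlen, e⟩
    · intro _; rfl
  · apply main (List.replicate F.n false)
    · simp
    · simp only [List.length_replicate, Nat.sub_self, Nat.zero_mul]
      have := Finset.mem_Icc.mp hicc
      omega
    · intro q hq hqlen
      constructor
      · intro e; exfalso; exact hL ⟨q, hq, hqlen, e⟩
      · intro e; exfalso; exact hR ⟨q, hq, hqlen, e⟩
    · intro e; exact absurd e hrt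

end AMG
namespace AMG

variable (F : CNFFam) (s w : ℕ)

lemma val_mk (β : Pos) (S' : Finset ℕ) :
    val F ⟨S', β.nd, β.lf, β.rf⟩ = val F β := by
  funext x
  cases x <;> simp [val, vval, ival] <;> rfl

lemma fals_restrict {β : Pos} {C : VClause}
    (hf : Clause.FalsByR (alph F s β) C) :
    Clause.FalsByR (alph F s ⟨β.S ∩ C.image (fun l => RefVar.idx l.1), β.nd, β.lf, β.rf⟩) C := by
  intro l hl
  have h := hf l hl
  unfold alph at h ⊢
  dsimp only at h ⊢
  rw [val_mk]
  by_cases hx : l.1.idx ∈ β.S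
  · have hmem : l.1.idx ∈ β.S ∩ C.image (fun l => RefVar.idx l.1) :=
      Finset.mem_inter.mpr ⟨hx, Finset.mem_image_of_mem _ hl⟩
    simp only [hx, if_true] at h
    simp only [hmem, if_true]
    exact h
  · by_cases hicc : l.1.idx ∈ Finset.Icc 1 s
    · simp [hx, hicc] at h
    · have hnx : l.1.idx ∉ β.S ∩ C.image (fun l => RefVar.idx l.1) :=
        fun hm => hx (Finset.mem_inter.mp hm).1
      simp only [hx, hicc, if_false] at h
      simp only [hnx, hicc, if_false]
      exact h

lemma walk (hWF : F.WF) (hn : 1 ≤ F.n) (hw : 1 ≤ w) (hs : 1 ≤ s)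
    (hlow : 6 * F.n * w ≤ s) (hunsat : ¬F.Sat)
    (Prf : List VClause) (hPrf : IsResRefutation (REF F s) Prf)
    (hwid : ∀ u : Fin Prf.length, idxWidth (Prf.get u) < w) :
    ∀ N : ℕ, ∀ u : Fin Prf.length, (u : ℕ) ≤ N → ∀ β : Pos, Inv F s w β →
      β.S.card < w → Clause.FalsByR (alph F s β) (Prf.get u) → False := by
  intro N
  induction N using Nat.strong_induction_on with
  | _ N IH =>
    intro u hu β hInv hcard hfals
    rcases (hPrf.2.1 u).2 with ⟨C, hC, hsub⟩ | ⟨v, v', hv, hv', x, hxv, hxv', hres⟩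
    · exact not_fals_axiom F s w hWF hn hs hunsat hInv hC (fun l hl => hfals l (hsub hl))
    · obtain ⟨β', hInv', hcard', hext, hini⟩ := extend F s w hn hw hlow hInv hcard x.idx
      have hfals' : Clause.FalsByR (alph F s β') (Prf.get u) :=
        fun l hl => hext _ _ (hfals l hl)
      have hxsome : ∃ c, alph F s β' x = some c := by
        by_cases hicc : x.idx ∈ Finset.Icc 1 s
        · exact ⟨val F β' x, by unfold alph; simp [hini hicc]⟩
        · have hns : x.idx ∉ β'.S := fun hm => hicc (hInv'.1 hm)
          exact ⟨false, by unfold alph; simp [hns, hicc]⟩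
      obtain ⟨c, hc⟩ := hxsome
      have hN1 : 0 < N := by omega
      cases c with
      | false =>
        have hfv : Clause.FalsByR (alph F s β') (Prf.get v) := by
          intro l hl
          by_cases e : l = (x, true)
          · rw [e]; simpa using hc
          · have hl' : l ∈ (Prf.get v).erase (x, true) := Finset.mem_erase.mpr ⟨e, hl⟩
            exact hfals' l (hres (Finset.mem_union_left _ hl'))
        refine IH (N-1) (by omega) v (by omega)
          ⟨β'.S ∩ (Prf.get v).image (fun l => RefVar.idx l.1), β'.nd, β'.lf, β'.rf⟩
          (Inv_subset F s w hInv' Finset.inter_subset_left) ?_ ?_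
        · calc (β'.S ∩ (Prf.get v).image (fun l => RefVar.idx l.1)).card
              ≤ ((Prf.get v).image (fun l => RefVar.idx l.1)).card :=
                Finset.card_le_card Finset.inter_subset_right
            _ < w := hwid v
        · exact fals_restrict F s hfv
      | true =>
        have hfv : Clause.FalsByR (alph F s β') (Prf.get v') := by
          intro l hl
          by_cases e : l = (x, false)
          · rw [e]; simpa using hc
          · have hl' : l ∈ (Prf.get v').erase (x, false) := Finset.mem_erase.mpr ⟨e, hl⟩
            exact hfals' l (hres (Finset.mem_union_right _ hl'))
        refine IH (N-1) (by omega) v' (by omega)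
          ⟨β'.S ∩ (Prf.get v').image (fun l => RefVar.idx l.1), β'.nd, β'.lf, β'.rf⟩
          (Inv_subset F s w hInv' Finset.inter_subset_left) ?_ ?_
        · calc (β'.S ∩ (Prf.get v').image (fun l => RefVar.idx l.1)).card
              ≤ ((Prf.get v').image (fun l => RefVar.idx l.1)).card :=
                Finset.card_le_card Finset.inter_subset_right
            _ < w := hwid v'
        · exact fals_restrict F s hfv

end AMG
/-! ## Statement 2 -/

/-- For all integers `n, w, s ≥ 1` with `2^n ≥ s ≥ 6nw` and every unsatisfiable CNF `F`
with `n` variables, every Resolution refutation of `REF(F,s)` has index-width at least `w`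
(i.e. contains a clause of index-width at least `w`). -/
theorem REF_index_width_lower_bound (F : CNFFam) (w s : ℕ)
    (hWF : F.WF) (hn : 1 ≤ F.n) (hw : 1 ≤ w) (hs : 1 ≤ s)
    (hlow : 6 * F.n * w ≤ s) (hhigh : s ≤ 2 ^ F.n) (hunsat : ¬F.Sat)
    (Prf : List VClause) (hPrf : IsResRefutation (REF F s) Prf) :
    ∃ u : Fin Prf.length, w ≤ idxWidth (Prf.get u) := by
  by_contra hcon
  push_neg at hcon
  have hne : Prf ≠ [] := hPrf.1
  have hlen : 0 < Prf.length := List.length_pos_iff.mpr hne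
  have hlast := hPrf.2.2
  set uL : Fin Prf.length := ⟨Prf.length - 1, by omega⟩ with huL
  have hempty : Prf.get uL = ∅ := by
    have h1 := List.getLast?_eq_getLast hne
    rw [h1] at hlast
    have h2 : Prf.getLast hne = Prf.get uL := by
      rw [List.getLast_eq_getElem]
      simp [huL]
    rw [h2] at hlast
    exact Option.some_injective _ hlast
  have hInv0 : AMG.Inv F s w ⟨∅, fun _ => [], fun _ => 0, fun _ => 0⟩ :=
    ⟨Finset.empty_subset _, fun u hu => absurd hu (by simp),
      fun u hu => absurd hu (by simp), fun u hu => absurd hu (by simp),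
      fun u hu => absurd hu (by simp), fun hs' => absurd hs' (by simp)⟩
  refine AMG.walk F s w hWF hn hw hs hlow hunsat Prf hPrf hcon Prf.length uL (by omega)
    ⟨∅, fun _ => [], fun _ => 0, fun _ => 0⟩ hInv0 (by simp; omega) ?_
  rw [hempty]
  intro l hl
  simp at hl
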